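/- Let {X_n} be a stationary sequence whose marginal distribution is unit Fréchet, F(x) = exp(−1/x) for x > 0, whose finite-dimensional distributions are multivariate extreme value (max-stable) distributions, and which satisfies condition D^(2)(u_n) for the levels u_n = n/τ, for each τ > 0. Then the extremal index of {X_n} equals θ_X = 1 / (1 − E(e^{−1/(X_1 ∨ X_2)})) − 2. -/

import Mathlib

open MeasureTheory Filter ProbabilityTheory

noncomputable section

namespace EIPaper

variable {Ω : Type*} [MeasurableSpace Ω]

/-- `P(A)` as a real number. -/
def pr (μ : Measure Ω) (A : Set Ω) : ℝ := (μ A).toReal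

/-- Block maximum `M_{i,j} = max_{s=i+1,…,j} X_s`, real-valued
(with junk value `0` when the block is empty, i.e. when `i ≥ j`). -/
def bmax (X : ℕ → Ω → ℝ) (i j : ℕ) (ω : Ω) : ℝ :=
  WithBot.unbotD 0 (((Finset.Icc (i + 1) j).image fun s => X s ω).max)

/-- The event `M_{i,j} ≤ u` (with the convention `M_{i,j} = -∞` for empty blocks). -/
def maxLE (X : ℕ → Ω → ℝ) (i j : ℕ) (u : ℝ) : Set Ω :=
  {ω | ∀ s ∈ Finset.Icc (i + 1) j, X s ω ≤ u}

/-- The event `M_{i,j} > u` (with the convention `M_{i,j} = -∞` for empty blocks). -/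
def maxGT (X : ℕ → Ω → ℝ) (i j : ℕ) (u : ℝ) : Set Ω :=
  {ω | ∃ s ∈ Finset.Icc (i + 1) j, u < X s ω}

/-- Stationarity of the sequence `X`. -/
def IsStationary (μ : Measure Ω) (X : ℕ → Ω → ℝ) : Prop :=
  ∀ m : ℕ, Measure.map (fun ω => fun i : ℕ => X (i + m) ω) μ
    = Measure.map (fun ω => fun i : ℕ => X i ω) μ

/-- The Leadbetter mixing coefficient `α_{n,l}` for the level `u`. -/
def alphaMix (μ : Measure Ω) (X : ℕ → Ω → ℝ) (u : ℝ) (n l : ℕ) : ℝ :=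
  sSup {a : ℝ | ∃ i₁ p q j₁ : ℕ, 1 ≤ i₁ ∧ 1 ≤ p ∧ 1 ≤ q ∧
    i₁ + p + l ≤ j₁ ∧ j₁ + q ≤ n ∧
    a = |pr μ (maxLE X i₁ (i₁ + p) u ∩ maxLE X j₁ (j₁ + q) u)
        - pr μ (maxLE X i₁ (i₁ + p) u) * pr μ (maxLE X j₁ (j₁ + q) u)|}

/-- Leadbetter's long-range dependence condition `D(u_n)`. -/
def CondD (μ : Measure Ω) (X : ℕ → Ω → ℝ) (u : ℕ → ℝ) : Prop :=
  ∃ l : ℕ → ℕ,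
    Tendsto (fun n => (l n : ℝ) / (n : ℝ)) atTop (nhds 0) ∧
    Tendsto (fun n => alphaMix μ X (u n) n (l n)) atTop (nhds 0)

/-- Admissibility of a block-count sequence `k_n` for the conditions `D^{(k)}(u_n)`:
`k_n → ∞`, `k_n α_{n,l_n} → 0` and `k_n l_n / n → 0` for some spacer sequence `l_n`. -/
def AdmissibleK (μ : Measure Ω) (X : ℕ → Ω → ℝ) (u : ℕ → ℝ) (kseq : ℕ → ℕ) : Prop :=
  ∃ l : ℕ → ℕ,
    Tendsto (fun n => (kseq n : ℝ)) atTop atTop ∧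
    Tendsto (fun n => (kseq n : ℝ) * alphaMix μ X (u n) n (l n)) atTop (nhds 0) ∧
    Tendsto (fun n => (kseq n : ℝ) * (l n : ℝ) / (n : ℝ)) atTop (nhds 0)

/-- The local part of condition `D^{(k)}(u_n)` with block length `r_n`:
`n ⬝ P(X_1 > u_n, M_{1,k} ≤ u_n < M_{k,r_n}) → 0`. -/
def LocalDk (μ : Measure Ω) (X : ℕ → Ω → ℝ) (u : ℕ → ℝ) (k : ℕ) (r : ℕ → ℕ) : Prop :=
  Tendsto (fun n : ℕ => (n : ℝ) *
      pr μ ({ω | u n < X 1 ω} ∩ maxLE X 1 k (u n) ∩ maxGT X k (r n) (u n)))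
    atTop (nhds 0)

/-- The local dependence condition `D^{(k)}(u_n)` of Chernick, Hsing and McCormick. -/
def CondDk (μ : Measure Ω) (X : ℕ → Ω → ℝ) (u : ℕ → ℝ) (k : ℕ) : Prop :=
  ∃ kseq : ℕ → ℕ, AdmissibleK μ X u kseq ∧ LocalDk μ X u k (fun n => n / kseq n)

/-- The cycle sequence `Z_n = M_{I_{n-1}, I_n}` of a renewal process `I`. -/
def cyc (X : ℕ → Ω → ℝ) (I : ℕ → Ω → ℕ) (n : ℕ) (ω : Ω) : ℝ :=
  bmax X (I (n - 1) ω) (I n ω) ω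

/-- `θ` is the extremal index of the stationary sequence `X`. -/
def HasExtremalIndex (μ : Measure Ω) (X : ℕ → Ω → ℝ) (θ : ℝ) : Prop :=
  ∀ τ : ℝ, 0 < τ → ∃ u : ℕ → ℝ,
    Tendsto (fun n : ℕ => (n : ℝ) * pr μ {ω | u n < X 1 ω}) atTop (nhds τ) ∧
    Tendsto (fun n => pr μ {ω | ∀ s ∈ Finset.Icc 1 n, X s ω ≤ u n}) atTop
      (nhds (Real.exp (-(θ * τ))))

/-- The finite-dimensional distributions of `X` are multivariate extreme value
(max-stable) distributions: `G(m x₁, …, m x_d)^m = G(x₁, …, x_d)`. -/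
def MaxStableFDD (μ : Measure Ω) (X : ℕ → Ω → ℝ) : Prop :=
  ∀ (d : ℕ) (x : Fin d → ℝ) (m : ℕ), 1 ≤ m → (∀ i, 0 < x i) →
    (pr μ {ω | ∀ i : Fin d, X ((i : ℕ) + 1) ω ≤ (m : ℝ) * x i}) ^ m
      = pr μ {ω | ∀ i : Fin d, X ((i : ℕ) + 1) ω ≤ x i}

/-- The moving maxima process `X_n = sup_{l ≥ 1} sup_{j ∈ ℤ} α_{l,j} Y_{l,n-j}`. -/
def mmProc (α : ℕ → ℤ → ℝ) (Y : ℕ → ℤ → Ω → ℝ) : ℕ → Ω → ℝ :=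
  fun n ω => ⨆ (l : ℕ) (j : ℤ), α l j * Y l ((n : ℤ) - j) ω


open Topology

set_option linter.unusedSectionVars false



/-- limit lemma: `u (e^{-a/u} - e^{-b/u}) → b - a`. -/
lemma tendsto_exp_diff (a b : ℝ) :
    Tendsto (fun u : ℝ => u * (Real.exp (-(a/u)) - Real.exp (-(b/u)))) atTop (𝓝 (b - a)) := by
  have hd : HasDerivAt (fun t : ℝ => Real.exp (-(a*t)) - Real.exp (-(b*t))) (b - a) 0 := by
    have h1 : HasDerivAt (fun t : ℝ => Real.exp (-(a*t))) (-a) 0 := by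
      have := (((hasDerivAt_id (0:ℝ)).const_mul (a:ℝ)).neg).exp
      simpa using this
    have h2 : HasDerivAt (fun t : ℝ => Real.exp (-(b*t))) (-b) 0 := by
      have := (((hasDerivAt_id (0:ℝ)).const_mul (b:ℝ)).neg).exp
      simpa using this
    have := h1.sub h2
    rw [show b - a = -a - -b by ring]
    exact this
  rw [hasDerivAt_iff_tendsto_slope] at hd
  have hslope : Tendsto (fun u : ℝ => slope (fun t : ℝ => Real.exp (-(a*t)) - Real.exp (-(b*t))) 0 u⁻¹)
      atTop (𝓝 (b - a)) := by
    apply hd.comp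
    apply tendsto_nhdsWithin_of_tendsto_nhds_of_eventually_within _ tendsto_inv_atTop_zero
    filter_upwards [eventually_gt_atTop (0:ℝ)] with u hu
    simp [ne_of_gt (inv_pos.2 hu)]
  apply hslope.congr'
  filter_upwards [eventually_gt_atTop (0:ℝ)] with u hu
  have hu0 : u ≠ 0 := ne_of_gt hu
  rw [slope_def_field]
  rw [mul_comm a u⁻¹, mul_comm b u⁻¹, inv_mul_eq_div, inv_mul_eq_div]
  simp only [mul_zero, sub_zero, sub_self]
  rw [div_eq_mul_inv _ u⁻¹, inv_inv, mul_comm]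

lemma tendsto_exp_diff_nat (a b : ℝ) :
    Tendsto (fun n : ℕ => (n:ℝ) * (Real.exp (-(a/(n:ℝ))) - Real.exp (-(b/(n:ℝ))))) atTop (𝓝 (b - a)) :=
  (tendsto_exp_diff a b).comp tendsto_natCast_atTop_atTop

/-- Stationarity as in the paper's definition. -/

lemma pr_nonneg (μ : Measure Ω) (A : Set Ω) : 0 ≤ pr μ A := ENNReal.toReal_nonneg

lemma pr_mono (μ : Measure Ω) [IsProbabilityMeasure μ] {A B : Set Ω} (h : A ⊆ B) :
    pr μ A ≤ pr μ B :=
  (ENNReal.toReal_le_toReal (measure_ne_top μ A) (measure_ne_top μ B)).2 (measure_mono h)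

lemma pr_univ (μ : Measure Ω) [IsProbabilityMeasure μ] : pr μ Set.univ = 1 := by
  simp [pr]

lemma pr_le_one (μ : Measure Ω) [IsProbabilityMeasure μ] (A : Set Ω) : pr μ A ≤ 1 := by
  simpa [pr_univ] using pr_mono μ (Set.subset_univ A)

lemma pr_inter_add_diff (μ : Measure Ω) [IsProbabilityMeasure μ] (S T : Set Ω)
    (hT : MeasurableSet T) : pr μ (S ∩ T) + pr μ (S \ T) = pr μ S := by
  rw [pr, pr, pr, ← ENNReal.toReal_add (measure_ne_top _ _) (measure_ne_top _ _),
    measure_inter_add_diff S hT]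

lemma pr_diff (μ : Measure Ω) [IsProbabilityMeasure μ] (S T : Set Ω)
    (hT : MeasurableSet T) : pr μ (S \ T) = pr μ S - pr μ (S ∩ T) := by
  have := pr_inter_add_diff μ S T hT; linarith

lemma measurableSet_pi_le (s : Finset ℕ) (u : ℝ) :
    MeasurableSet {f : ℕ → ℝ | ∀ i ∈ s, f i ≤ u} := by
  have : {f : ℕ → ℝ | ∀ i ∈ s, f i ≤ u} = ⋂ i ∈ (s : Set ℕ), {f : ℕ → ℝ | f i ≤ u} := by
    ext f; simp
  rw [this]
  exact MeasurableSet.biInter s.countable_toSet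
    (fun i _ => measurableSet_le (measurable_pi_apply i) measurable_const)

lemma measurableSet_block (X : ℕ → Ω → ℝ) (hXmeas : ∀ i, Measurable (X i))
    (s : Finset ℕ) (u : ℝ) : MeasurableSet {ω | ∀ i ∈ s, X i ω ≤ u} := by
  have : {ω | ∀ i ∈ s, X i ω ≤ u} = ⋂ i ∈ (s : Set ℕ), {ω | X i ω ≤ u} := by
    ext ω; simp
  rw [this]
  exact MeasurableSet.biInter s.countable_toSet
    (fun i _ => measurableSet_le (hXmeas i) measurable_const)

lemma stat_shift (μ : Measure Ω) (X : ℕ → Ω → ℝ) (hXmeas : ∀ i, Measurable (X i))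
    (hstat : IsStationary μ X) (m : ℕ) (s : Finset ℕ) (u : ℝ) :
    μ {ω | ∀ i ∈ s, X (i + m) ω ≤ u} = μ {ω | ∀ i ∈ s, X i ω ≤ u} := by
  have hmeas1 : Measurable (fun ω => fun i : ℕ => X (i + m) ω) :=
    measurable_pi_lambda _ (fun i => hXmeas (i + m))
  have hmeas2 : Measurable (fun ω => fun i : ℕ => X i ω) :=
    measurable_pi_lambda _ (fun i => hXmeas i)
  have hC := measurableSet_pi_le s u
  have h1 := Measure.map_apply (μ := μ) hmeas1 hC
  have h2 := Measure.map_apply (μ := μ) hmeas2 hC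
  have h3 := hstat m
  have e1 : (fun ω => fun i : ℕ => X (i + m) ω) ⁻¹' {f : ℕ → ℝ | ∀ i ∈ s, f i ≤ u}
      = {ω | ∀ i ∈ s, X (i + m) ω ≤ u} := rfl
  have e2 : (fun ω => fun i : ℕ => X i ω) ⁻¹' {f : ℕ → ℝ | ∀ i ∈ s, f i ≤ u}
      = {ω | ∀ i ∈ s, X i ω ≤ u} := rfl
  rw [← e1, ← h1, h3, h2, e2]

/-- the distribution function of a block of `d` consecutive variables. -/
def gfun (μ : Measure Ω) (X : ℕ → Ω → ℝ) (d : ℕ) (u : ℝ) : ℝ :=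
  pr μ {ω | ∀ s ∈ Finset.Icc 1 d, X s ω ≤ u}

lemma pr_block (μ : Measure Ω) (X : ℕ → Ω → ℝ) (hXmeas : ∀ i, Measurable (X i))
    (hstat : IsStationary μ X) (a k : ℕ) (u : ℝ) :
    pr μ {ω | ∀ s ∈ Finset.Icc (a + 1) (a + k), X s ω ≤ u} = gfun μ X k u := by
  unfold gfun pr
  congr 1
  have e : {ω | ∀ s ∈ Finset.Icc (a + 1) (a + k), X s ω ≤ u}
      = {ω | ∀ i ∈ Finset.Icc 1 k, X (i + a) ω ≤ u} := by
    ext ω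
    simp only [Set.mem_setOf_eq, Finset.mem_Icc]
    constructor
    · intro h i hi
      exact h (i + a) (by omega)
    · intro h s hs
      have h2 := h (s - a) (by omega)
      have : s - a + a = s := by omega
      rwa [this] at h2
  rw [e, stat_shift μ X hXmeas hstat a (Finset.Icc 1 k) u]

lemma pr_single (μ : Measure Ω) (X : ℕ → Ω → ℝ) (hXmeas : ∀ i, Measurable (X i))
    (hstat : IsStationary μ X)
    (hfrech : ∀ x : ℝ, 0 < x → pr μ {ω | X 1 ω ≤ x} = Real.exp (-(1 / x)))
    (s : ℕ) (hs : 1 ≤ s) (u : ℝ) (hu : 0 < u) :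
    pr μ {ω | X s ω ≤ u} = Real.exp (-(1 / u)) := by
  have e : {ω | X s ω ≤ u} = {ω | ∀ i ∈ Finset.Icc s s, X i ω ≤ u} := by
    ext ω; simp
  have e2 : {ω | ∀ i ∈ Finset.Icc s s, X i ω ≤ u}
      = {ω | ∀ i ∈ Finset.Icc ((s-1) + 1) ((s-1) + 1), X i ω ≤ u} := by
    have : (s-1) + 1 = s := by omega
    rw [this]
  rw [e, e2, pr_block μ X hXmeas hstat (s-1) 1 u]
  have e3 : {ω | ∀ s ∈ Finset.Icc 1 1, X s ω ≤ u} = {ω | X 1 ω ≤ u} := by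
    ext ω; simp
  rw [gfun, e3, hfrech u hu]

lemma gfun_zero (μ : Measure Ω) [IsProbabilityMeasure μ] (X : ℕ → Ω → ℝ) (u : ℝ) :
    gfun μ X 0 u = 1 := by
  have : {ω : Ω | ∀ s ∈ Finset.Icc 1 0, X s ω ≤ u} = Set.univ := by
    ext ω; simp
  rw [gfun, this, pr_univ]

lemma gfun_one (μ : Measure Ω) (X : ℕ → Ω → ℝ)
    (hfrech : ∀ x : ℝ, 0 < x → pr μ {ω | X 1 ω ≤ x} = Real.exp (-(1 / x)))
    (u : ℝ) (hu : 0 < u) : gfun μ X 1 u = Real.exp (-(1 / u)) := by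
  have e3 : {ω | ∀ s ∈ Finset.Icc 1 1, X s ω ≤ u} = {ω | X 1 ω ≤ u} := by
    ext ω; simp
  rw [gfun, e3, hfrech u hu]

lemma gfun_mono_u (μ : Measure Ω) [IsProbabilityMeasure μ] (X : ℕ → Ω → ℝ) (d : ℕ)
    {u v : ℝ} (h : u ≤ v) : gfun μ X d u ≤ gfun μ X d v := by
  apply pr_mono
  intro ω hω s hs
  exact le_trans (hω s hs) h

lemma gfun_anti_d (μ : Measure Ω) [IsProbabilityMeasure μ] (X : ℕ → Ω → ℝ) {d e : ℕ}
    (h : d ≤ e) (u : ℝ) : gfun μ X e u ≤ gfun μ X d u := by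
  apply pr_mono
  intro ω hω s hs
  refine hω s ?_
  simp only [Finset.mem_Icc] at hs ⊢
  omega

lemma gfun_le_one (μ : Measure Ω) [IsProbabilityMeasure μ] (X : ℕ → Ω → ℝ) (d : ℕ) (u : ℝ) :
    gfun μ X d u ≤ 1 := pr_le_one μ _

lemma fin_event_eq (X : ℕ → Ω → ℝ) (v : ℝ) (d : ℕ) :
    {ω : Ω | ∀ i : Fin d, X ((i : ℕ) + 1) ω ≤ v} = {ω | ∀ s ∈ Finset.Icc 1 d, X s ω ≤ v} := by
  ext ω
  simp only [Set.mem_setOf_eq, Finset.mem_Icc]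
  constructor
  · rintro h s ⟨hs1, hs2⟩
    have h2 := h ⟨s - 1, by omega⟩
    simpa [Nat.sub_add_cancel hs1] using h2
  · intro h i
    exact h ((i : ℕ) + 1) ⟨by omega, by have := i.isLt; omega⟩

lemma gfun_pow (μ : Measure Ω) (X : ℕ → Ω → ℝ) (hms : MaxStableFDD μ X)
    (d m : ℕ) (hm : 1 ≤ m) (x : ℝ) (hx : 0 < x) :
    (gfun μ X d ((m : ℝ) * x)) ^ m = gfun μ X d x := by
  have h := hms d (fun _ => x) m hm (fun _ => hx)
  rw [fin_event_eq, fin_event_eq] at h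
  exact h

lemma one_sub_exp_le (x : ℝ) : 1 - Real.exp (-x) ≤ x := by
  have := Real.add_one_le_exp (-x); linarith

lemma gfun_lb (μ : Measure Ω) [IsProbabilityMeasure μ] (X : ℕ → Ω → ℝ)
    (hXmeas : ∀ i, Measurable (X i)) (hstat : IsStationary μ X)
    (hfrech : ∀ x : ℝ, 0 < x → pr μ {ω | X 1 ω ≤ x} = Real.exp (-(1 / x)))
    (d : ℕ) (u : ℝ) (hu : 0 < u) :
    1 - (d : ℝ) * (1 - Real.exp (-(1 / u))) ≤ gfun μ X d u := by
  have hcompl : {ω : Ω | ∀ s ∈ Finset.Icc 1 d, X s ω ≤ u}ᶜ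
      = ⋃ s ∈ Finset.Icc 1 d, {ω | X s ω ≤ u}ᶜ := by
    ext ω
    simp only [Set.mem_compl_iff, Set.mem_setOf_eq, not_forall, Set.mem_iUnion, not_le]
    try tauto
  have hle : μ ({ω : Ω | ∀ s ∈ Finset.Icc 1 d, X s ω ≤ u}ᶜ)
      ≤ ∑ s ∈ Finset.Icc 1 d, μ ({ω | X s ω ≤ u}ᶜ) := by
    rw [hcompl]
    exact measure_biUnion_finset_le _ _
  have hsingle : ∀ s ∈ Finset.Icc 1 d, pr μ ({ω | X s ω ≤ u}ᶜ) = 1 - Real.exp (-(1 / u)) := by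
    intro s hs
    have hmeas : MeasurableSet {ω | X s ω ≤ u} := measurableSet_le (hXmeas s) measurable_const
    have : pr μ ({ω | X s ω ≤ u}ᶜ) = 1 - pr μ {ω | X s ω ≤ u} := by
      have h1 := pr_inter_add_diff μ Set.univ {ω | X s ω ≤ u} hmeas
      rw [Set.univ_inter, pr_univ] at h1
      have : Set.univ \ {ω | X s ω ≤ u} = {ω | X s ω ≤ u}ᶜ := by
        ext ω; simp
      rw [this] at h1; linarith
    rw [this, pr_single μ X hXmeas hstat hfrech s (Finset.mem_Icc.1 hs).1 u hu]
  -- convert to real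
  have hreal : pr μ ({ω : Ω | ∀ s ∈ Finset.Icc 1 d, X s ω ≤ u}ᶜ)
      ≤ (d : ℝ) * (1 - Real.exp (-(1 / u))) := by
    have h2 : pr μ ({ω : Ω | ∀ s ∈ Finset.Icc 1 d, X s ω ≤ u}ᶜ)
        ≤ ∑ s ∈ Finset.Icc 1 d, pr μ ({ω | X s ω ≤ u}ᶜ) := by
      rw [pr]
      have hfin : ∀ s ∈ Finset.Icc 1 d, μ ({ω | X s ω ≤ u}ᶜ) ≠ ⊤ := fun s _ => measure_ne_top μ _
      calc (μ ({ω : Ω | ∀ s ∈ Finset.Icc 1 d, X s ω ≤ u}ᶜ)).toReal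
          ≤ (∑ s ∈ Finset.Icc 1 d, μ ({ω | X s ω ≤ u}ᶜ)).toReal := by
            apply ENNReal.toReal_mono _ hle
            exact (ENNReal.sum_lt_top.2 (fun s hs => lt_top_iff_ne_top.2 (hfin s hs))).ne
        _ = ∑ s ∈ Finset.Icc 1 d, pr μ ({ω | X s ω ≤ u}ᶜ) := ENNReal.toReal_sum hfin
    calc pr μ ({ω : Ω | ∀ s ∈ Finset.Icc 1 d, X s ω ≤ u}ᶜ)
        ≤ ∑ s ∈ Finset.Icc 1 d, pr μ ({ω | X s ω ≤ u}ᶜ) := h2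
      _ = ∑ s ∈ Finset.Icc 1 d, (1 - Real.exp (-(1 / u))) := Finset.sum_congr rfl hsingle
      _ = (d : ℝ) * (1 - Real.exp (-(1 / u))) := by
          rw [Finset.sum_const, Nat.card_Icc]
          simp [nsmul_eq_mul]
  have hprc : pr μ ({ω : Ω | ∀ s ∈ Finset.Icc 1 d, X s ω ≤ u}ᶜ)
      = 1 - gfun μ X d u := by
    have hmeas := measurableSet_block X hXmeas (Finset.Icc 1 d) u
    have h1 := pr_inter_add_diff μ Set.univ _ hmeas
    rw [Set.univ_inter, pr_univ] at h1
    have : Set.univ \ {ω : Ω | ∀ s ∈ Finset.Icc 1 d, X s ω ≤ u}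
        = {ω : Ω | ∀ s ∈ Finset.Icc 1 d, X s ω ≤ u}ᶜ := by ext ω; simp
    rw [this] at h1
    rw [gfun]; linarith
  rw [hprc] at hreal
  linarith

lemma gfun_pos (μ : Measure Ω) [IsProbabilityMeasure μ] (X : ℕ → Ω → ℝ)
    (hXmeas : ∀ i, Measurable (X i)) (hstat : IsStationary μ X)
    (hfrech : ∀ x : ℝ, 0 < x → pr μ {ω | X 1 ω ≤ x} = Real.exp (-(1 / x)))
    (hms : MaxStableFDD μ X) (d : ℕ) (u : ℝ) (hu : 0 < u) :
    0 < gfun μ X d u := by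
  obtain ⟨m₀, hm₀⟩ := exists_nat_gt ((d : ℝ) / u)
  set m := m₀ + 1 with hm
  have hm1 : 1 ≤ m := Nat.le_add_left 1 m₀
  have hmR : (d : ℝ) / u < (m : ℝ) := by
    have : (m₀ : ℝ) ≤ (m : ℝ) := by exact_mod_cast Nat.le_succ m₀
    linarith
  have hmu : 0 < (m : ℝ) * u := by positivity
  have hlb := gfun_lb μ X hXmeas hstat hfrech d ((m : ℝ) * u) hmu
  have hsmall : (d : ℝ) * (1 - Real.exp (-(1 / ((m : ℝ) * u)))) < 1 := by
    have h1 : 1 - Real.exp (-(1 / ((m : ℝ) * u))) ≤ 1 / ((m : ℝ) * u) := one_sub_exp_le _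
    have h2 : (d : ℝ) * (1 - Real.exp (-(1 / ((m : ℝ) * u)))) ≤ (d : ℝ) / ((m : ℝ) * u) := by
      have hd0 : (0:ℝ) ≤ (d:ℝ) := Nat.cast_nonneg d
      calc (d : ℝ) * (1 - Real.exp (-(1 / ((m : ℝ) * u)))) ≤ (d : ℝ) * (1 / ((m : ℝ) * u)) :=
            mul_le_mul_of_nonneg_left h1 hd0
        _ = (d : ℝ) / ((m : ℝ) * u) := by ring
    have h3 : (d : ℝ) / ((m : ℝ) * u) < 1 := by
      rw [div_lt_one hmu]
      have := (div_lt_iff₀ hu).1 hmR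
      linarith [this]
    linarith
  have hgm : 0 < gfun μ X d ((m : ℝ) * u) := by linarith
  have := gfun_pow μ X hms d m hm1 u hu
  rw [← this]
  positivity

/-- the key structural fact: every block distribution is of Fréchet form. -/
lemma exists_cseq (μ : Measure Ω) [IsProbabilityMeasure μ] (X : ℕ → Ω → ℝ)
    (hXmeas : ∀ i, Measurable (X i)) (hstat : IsStationary μ X)
    (hfrech : ∀ x : ℝ, 0 < x → pr μ {ω | X 1 ω ≤ x} = Real.exp (-(1 / x)))
    (hms : MaxStableFDD μ X) :
    ∃ c : ℕ → ℝ, c 0 = 0 ∧ c 1 = 1 ∧ Monotone c ∧ (∀ d : ℕ, c d ≤ (d : ℝ)) ∧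
      ∀ d : ℕ, ∀ u : ℝ, 0 < u → gfun μ X d u = Real.exp (-(c d / u)) := by
  -- Step 1: for each d, find the exponent
  have main : ∀ d : ℕ, ∀ u : ℝ, 0 < u →
      gfun μ X d u = Real.exp (-((- Real.log (gfun μ X d 1)) / u)) := by
    intro d
    set φ : ℝ → ℝ := fun u => - Real.log (gfun μ X d u) with hφ
    set h : ℝ → ℝ := fun u => u * φ u with hh
    have hφ_nonneg : ∀ u : ℝ, 0 < u → 0 ≤ φ u := by
      intro u hu
      have h1 : gfun μ X d u ≤ 1 := gfun_le_one μ X d u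
      have := Real.log_nonpos (le_of_lt (gfun_pos μ X hXmeas hstat hfrech hms d u hu)) h1
      simp only [hφ]; linarith
    have hφ_anti : ∀ u v : ℝ, 0 < u → u ≤ v → φ v ≤ φ u := by
      intro u v hu huv
      have := Real.log_le_log (gfun_pos μ X hXmeas hstat hfrech hms d u hu)
        (gfun_mono_u μ X d huv)
      simp only [hφ]; linarith
    have hnat : ∀ m : ℕ, 1 ≤ m → ∀ u : ℝ, 0 < u → h ((m : ℝ) * u) = h u := by
      intro m hm u hu
      have hpow := gfun_pow μ X hms d m hm u hu
      have hgpos : 0 < gfun μ X d ((m : ℝ) * u) :=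
        gfun_pos μ X hXmeas hstat hfrech hms d _ (by positivity)
      have hlog : (m : ℝ) * Real.log (gfun μ X d ((m : ℝ) * u)) = Real.log (gfun μ X d u) := by
        rw [← Real.log_pow, hpow]
      simp only [hh, hφ]
      have : (m:ℝ) * u * -Real.log (gfun μ X d ((m:ℝ) * u))
          = u * -((m:ℝ) * Real.log (gfun μ X d ((m:ℝ) * u))) := by ring
      rw [this, hlog]
    -- rational invariance
    have hrat : ∀ a b : ℕ, 1 ≤ a → 1 ≤ b → ∀ u : ℝ, 0 < u → h (((a : ℝ) / (b : ℝ)) * u) = h u := by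
      intro a b ha hb u hu
      have hb0 : (0:ℝ) < (b:ℝ) := by exact_mod_cast hb
      have ha0 : (0:ℝ) < (a:ℝ) := by exact_mod_cast ha
      have hx : 0 < ((a : ℝ) / (b : ℝ)) * u := by positivity
      have h1 := hnat b hb (((a : ℝ) / (b : ℝ)) * u) hx
      have h2 : (b : ℝ) * (((a : ℝ) / (b : ℝ)) * u) = (a : ℝ) * u := by
        field_simp
      rw [h2] at h1
      rw [← h1, hnat a ha u hu]
    -- constancy
    have hconst : ∀ x y : ℝ, 0 < x → 0 < y → x < y → h y = h x := by
      intro x y hx hy hxy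
      have hxne : x ≠ 0 := ne_of_gt hx
      have hmain : ∀ q : ℚ, 0 < (q:ℝ) → h ((q : ℝ) * x) = h x := by
        intro q hq
        have ha : 1 ≤ q.num.toNat := by
          have : 0 < q := by exact_mod_cast hq
          have := Rat.num_pos.2 this
          omega
        have hb : 1 ≤ q.den := q.den_pos
        have hcast : ((q.num.toNat : ℝ) / (q.den : ℝ)) = (q : ℝ) := by
          have hq0 : 0 < q := by exact_mod_cast hq
          have hnum : (q.num.toNat : ℤ) = q.num := Int.toNat_of_nonneg (le_of_lt (Rat.num_pos.2 hq0))
          rw [Rat.cast_def]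
          congr 1
          exact_mod_cast congrArg (fun z : ℤ => (z : ℝ)) hnum
        rw [← hcast]
        exact hrat q.num.toNat q.den ha hb x hx
      -- h y ≤ h x
      have hle1 : h y ≤ h x := by
        apply le_of_forall_pos_le_add
        intro ε hε
        have hδpos : 0 < ε / (h x + 1) := by
          have := hφ_nonneg x hx
          have hhx : 0 ≤ h x := by simp only [hh]; positivity
          positivity
        set δ := ε / (h x + 1) with hδ
        have hhx : 0 ≤ h x := by
          have := hφ_nonneg x hx
          simp only [hh]; positivity
        obtain ⟨q, hq1, hq2⟩ := exists_rat_btwn (show y / (x * (1 + δ)) < y / x by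
          apply div_lt_div_of_pos_left hy (by positivity)
          nlinarith)
        have hq0 : 0 < (q : ℝ) := lt_trans (by positivity) hq1
        have hqx : (q : ℝ) * x < y := by
          rw [lt_div_iff₀ hx] at hq2; linarith
        have hqxpos : 0 < (q : ℝ) * x := by positivity
        have hstep : φ y ≤ φ ((q : ℝ) * x) := hφ_anti _ _ hqxpos (le_of_lt hqx)
        have hhq : h ((q : ℝ) * x) = h x := hmain q hq0
        have hyb : y < (q : ℝ) * (x * (1 + δ)) := by
          rw [div_lt_iff₀ (by positivity)] at hq1; linarith
        calc h y = y * φ y := rfl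
          _ ≤ y * φ ((q : ℝ) * x) := by
              apply mul_le_mul_of_nonneg_left hstep (le_of_lt hy)
          _ ≤ ((q : ℝ) * (x * (1 + δ))) * φ ((q : ℝ) * x) := by
              apply mul_le_mul_of_nonneg_right (le_of_lt hyb) (hφ_nonneg _ hqxpos)
          _ = (1 + δ) * h ((q : ℝ) * x) := by simp only [hh]; ring
          _ = (1 + δ) * h x := by rw [hhq]
          _ = h x + δ * h x := by ring
          _ ≤ h x + ε := by
              have : δ * h x ≤ δ * (h x + 1) := by nlinarith
              have h2 : δ * (h x + 1) = ε := by
                rw [hδ]; field_simp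
              linarith
      -- h x ≤ h y
      have hle2 : h x ≤ h y := by
        apply le_of_forall_pos_le_add
        intro ε hε
        have hhy : 0 ≤ h y := by
          have := hφ_nonneg y hy
          simp only [hh]; positivity
        have hδpos : 0 < ε / (h y + 1) := by positivity
        set δ := ε / (h y + 1) with hδ
        obtain ⟨q, hq1, hq2⟩ := exists_rat_btwn (show y / x < y * (1 + δ) / x by
          apply div_lt_div_of_pos_right _ hx
          nlinarith)
        have hq0 : 0 < (q : ℝ) := lt_trans (by positivity) hq1
        have hqx : y < (q : ℝ) * x := by
          rw [div_lt_iff₀ hx] at hq1; linarith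
        have hqxpos : 0 < (q : ℝ) * x := by positivity
        have hstep : φ ((q : ℝ) * x) ≤ φ y := hφ_anti _ _ hy (le_of_lt hqx)
        have hhq : h ((q : ℝ) * x) = h x := hmain q hq0
        have hqb : (q : ℝ) * x < y * (1 + δ) := by
          rw [lt_div_iff₀ hx] at hq2; linarith
        have : h ((q:ℝ) * x) ≤ y * (1 + δ) * φ y := by
          calc h ((q:ℝ) * x) = ((q:ℝ) * x) * φ ((q:ℝ) * x) := rfl
            _ ≤ ((q:ℝ) * x) * φ y := mul_le_mul_of_nonneg_left hstep (le_of_lt hqxpos)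
            _ ≤ (y * (1 + δ)) * φ y := mul_le_mul_of_nonneg_right (le_of_lt hqb) (hφ_nonneg y hy)
        rw [hhq] at this
        have h2 : y * (1 + δ) * φ y = h y + δ * h y := by simp only [hh]; ring
        rw [h2] at this
        have h3 : δ * h y ≤ ε := by
          have : δ * h y ≤ δ * (h y + 1) := by nlinarith
          have h4 : δ * (h y + 1) = ε := by rw [hδ]; field_simp
          linarith
        linarith
      linarith
    -- conclude
    intro u hu
    have hc : h u = h 1 := by
      rcases lt_trichotomy u 1 with h1 | h1 | h1
      · exact (hconst u 1 hu one_pos h1).symm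
      · rw [h1]
      · exact hconst 1 u one_pos hu h1
    have hgpos := gfun_pos μ X hXmeas hstat hfrech hms d u hu
    have : φ u = (- Real.log (gfun μ X d 1)) / u := by
      have hexp : u * φ u = 1 * φ 1 := hc
      have : φ u = φ 1 / u := by
        field_simp at hexp ⊢
        linarith
      simpa [hφ] using this
    have hlog : Real.log (gfun μ X d u) = -((- Real.log (gfun μ X d 1)) / u) := by
      simp only [hφ] at this; linarith
    rw [← Real.exp_log hgpos, hlog]
  -- package
  refine ⟨fun d => - Real.log (gfun μ X d 1), ?_, ?_, ?_, ?_, fun d u hu => main d u hu⟩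
  · simp [gfun_zero]
  · show - Real.log (gfun μ X 1 1) = 1
    have := gfun_one μ X hfrech 1 one_pos
    rw [this, Real.log_exp]; norm_num
  · intro d e hde
    have h1 := gfun_anti_d μ X hde (1:ℝ)
    have hd := gfun_pos μ X hXmeas hstat hfrech hms e 1 one_pos
    have := Real.log_le_log hd h1
    show - Real.log (gfun μ X d 1) ≤ - Real.log (gfun μ X e 1)
    linarith
  · intro d
    -- c d ≤ d via the union bound and limits
    have hineq : ∀ n : ℕ, 1 ≤ n →
        (n : ℝ) * (Real.exp (-((0:ℝ)/(n:ℝ))) - Real.exp (-((- Real.log (gfun μ X d 1))/(n:ℝ))))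
          ≤ (d : ℝ) * ((n : ℝ) * (Real.exp (-((0:ℝ)/(n:ℝ))) - Real.exp (-(1/(n:ℝ))))) := by
      intro n hn
      have hn0 : (0:ℝ) < (n:ℝ) := by exact_mod_cast hn
      have hlb := gfun_lb μ X hXmeas hstat hfrech d (n:ℝ) hn0
      rw [main (d) (n:ℝ) hn0] at hlb
      simp only [zero_div, neg_zero, Real.exp_zero]
      have hd0 : (0:ℝ) ≤ (d:ℝ) := Nat.cast_nonneg d
      have key : 1 - Real.exp (-((- Real.log (gfun μ X d 1))/(n:ℝ)))
          ≤ (d:ℝ) * (1 - Real.exp (-(1/(n:ℝ)))) := by linarith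
      calc (n:ℝ) * (1 - Real.exp (-((- Real.log (gfun μ X d 1))/(n:ℝ))))
          ≤ (n:ℝ) * ((d:ℝ) * (1 - Real.exp (-(1/(n:ℝ))))) :=
            mul_le_mul_of_nonneg_left key (le_of_lt hn0)
        _ = (d : ℝ) * ((n : ℝ) * (1 - Real.exp (-(1/(n:ℝ))))) := by ring
    have hL := tendsto_exp_diff_nat 0 (- Real.log (gfun μ X d 1))
    have hR := (tendsto_exp_diff_nat 0 1).const_mul (d : ℝ)
    have := le_of_tendsto_of_tendsto hL hR ?_
    · simpa using this
    · filter_upwards [eventually_ge_atTop 1] with n hn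
      exact hineq n hn

section WithC

variable (μ : Measure Ω) [IsProbabilityMeasure μ] (X : ℕ → Ω → ℝ)
  (hXmeas : ∀ i, Measurable (X i)) (hstat : IsStationary μ X) (c : ℕ → ℝ)
  (hg : ∀ d : ℕ, ∀ u : ℝ, 0 < u → gfun μ X d u = Real.exp (-(c d / u)))

include hXmeas hstat hg

/-- `P(X₁ > u, X₂ ≤ u, …, X_{j+1} ≤ u) = e^{-c_j/u} - e^{-c_{j+1}/u}`. -/
lemma pr_exc (j : ℕ) (u : ℝ) (hu : 0 < u) :
    pr μ ({ω | u < X 1 ω} ∩ {ω | ∀ s ∈ Finset.Icc 2 (j + 1), X s ω ≤ u})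
      = Real.exp (-(c j / u)) - Real.exp (-(c (j + 1) / u)) := by
  set S := {ω | ∀ s ∈ Finset.Icc 2 (j + 1), X s ω ≤ u} with hS
  set A := {ω | X 1 ω ≤ u} with hA
  have hAm : MeasurableSet A := measurableSet_le (hXmeas 1) measurable_const
  have hev : {ω | u < X 1 ω} ∩ S = S \ A := by
    ext ω
    simp only [hS, hA, Set.mem_inter_iff, Set.mem_setOf_eq, Set.mem_diff, not_le]
    tauto
  rw [hev, pr_diff μ S A hAm]
  have hprS : pr μ S = gfun μ X j u := by
    have e : S = {ω | ∀ s ∈ Finset.Icc (1 + 1) (1 + j), X s ω ≤ u} := by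
      rw [hS, Nat.add_comm 1 j]
    rw [e, pr_block μ X hXmeas hstat 1 j u]
  have hprSA : pr μ (S ∩ A) = gfun μ X (j + 1) u := by
    have e : S ∩ A = {ω | ∀ s ∈ Finset.Icc 1 (j + 1), X s ω ≤ u} := by
      ext ω
      simp only [hS, hA, Set.mem_inter_iff, Set.mem_setOf_eq, Finset.mem_Icc]
      constructor
      · rintro ⟨h1, h2⟩ s ⟨hs1, hs2⟩
        rcases Nat.eq_or_lt_of_le hs1 with h | h
        · rw [← h]; exact h2
        · exact h1 s ⟨h, hs2⟩
      · intro h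
        exact ⟨fun s hs => h s ⟨by omega, hs.2⟩, h 1 ⟨le_refl 1, by omega⟩⟩
    rw [e]; rfl
  rw [hprS, hprSA, hg j u hu, hg (j + 1) u hu]

/-- the `D^{(2)}` event probability, exactly. -/
lemma pr_D2event (r : ℕ) (hr : 3 ≤ r) (u : ℝ) (hu : 0 < u) :
    pr μ ({ω | u < X 1 ω} ∩ maxLE X 1 2 u ∩ maxGT X 2 r u)
      = (Real.exp (-(c 1 / u)) - Real.exp (-(c 2 / u)))
        - (Real.exp (-(c (r - 1) / u)) - Real.exp (-(c r / u))) := by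
  set B := {ω | ∀ s ∈ Finset.Icc 2 2, X s ω ≤ u} with hB
  set D := {ω | ∀ s ∈ Finset.Icc 3 r, X s ω ≤ u} with hD
  set A := {ω | X 1 ω ≤ u} with hA
  have hAm : MeasurableSet A := measurableSet_le (hXmeas 1) measurable_const
  have hDm : MeasurableSet D := measurableSet_block X hXmeas _ u
  have hev : {ω | u < X 1 ω} ∩ maxLE X 1 2 u ∩ maxGT X 2 r u = (B \ D) \ A := by
    ext ω
    simp only [maxLE, maxGT, hB, hD, hA, Set.mem_inter_iff, Set.mem_setOf_eq,
      Set.mem_diff, not_le, not_forall, exists_prop]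
    tauto
  rw [hev, pr_diff μ _ A hAm, pr_diff μ B D hDm]
  have e2 : (B \ D) ∩ A = (B ∩ A) \ D := by
    ext ω; simp only [Set.mem_inter_iff, Set.mem_diff]; tauto
  rw [e2, pr_diff μ _ D hDm]
  have hprB : pr μ B = gfun μ X 1 u := by
    have e : B = {ω | ∀ s ∈ Finset.Icc (1 + 1) (1 + 1), X s ω ≤ u} := rfl
    rw [e, pr_block μ X hXmeas hstat 1 1 u]
  have hprBD : pr μ (B ∩ D) = gfun μ X (r - 1) u := by
    have e : B ∩ D = {ω | ∀ s ∈ Finset.Icc (1 + 1) (1 + (r - 1)), X s ω ≤ u} := by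
      ext ω
      simp only [hB, hD, Set.mem_inter_iff, Set.mem_setOf_eq, Finset.mem_Icc]
      constructor
      · rintro ⟨h1, h2⟩ s ⟨hs1, hs2⟩
        rcases Nat.lt_or_ge s 3 with h | h
        · exact h1 s ⟨by omega, by omega⟩
        · exact h2 s ⟨h, by omega⟩
      · intro h
        exact ⟨fun s hs => h s (by omega),
          fun s hs => h s (by omega)⟩
    rw [e, pr_block μ X hXmeas hstat 1 (r - 1) u]
  have hprBA : pr μ (B ∩ A) = gfun μ X 2 u := by
    have e : B ∩ A = {ω | ∀ s ∈ Finset.Icc 1 2, X s ω ≤ u} := by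
      ext ω
      simp only [hB, hA, Set.mem_inter_iff, Set.mem_setOf_eq, Finset.mem_Icc]
      constructor
      · rintro ⟨h1, h2⟩ s ⟨hs1, hs2⟩
        rcases Nat.eq_or_lt_of_le hs1 with h | h
        · rw [← h]; exact h2
        · exact h1 s ⟨h, hs2⟩
      · intro h
        exact ⟨fun s hs => h s ⟨by omega, hs.2⟩, h 1 ⟨le_refl 1, by omega⟩⟩
    rw [e]; rfl
  have hprBAD : pr μ ((B ∩ A) ∩ D) = gfun μ X r u := by
    have e : (B ∩ A) ∩ D = {ω | ∀ s ∈ Finset.Icc 1 r, X s ω ≤ u} := by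
      ext ω
      simp only [hB, hA, hD, Set.mem_inter_iff, Set.mem_setOf_eq, Finset.mem_Icc]
      constructor
      · rintro ⟨⟨h1, h2⟩, h3⟩ s ⟨hs1, hs2⟩
        rcases Nat.lt_or_ge s 2 with h | h
        · have : s = 1 := by omega
          rw [this]; exact h2
        · rcases Nat.lt_or_ge s 3 with h' | h'
          · exact h1 s ⟨by omega, by omega⟩
          · exact h3 s ⟨h', hs2⟩
      · intro h
        exact ⟨⟨fun s hs => h s (by omega),
          h 1 ⟨le_refl 1, by omega⟩⟩,
          fun s hs => h s (by omega)⟩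
    rw [e]; rfl
  rw [hprB, hprBD, hprBA, hprBAD, hg 1 u hu, hg 2 u hu, hg (r - 1) u hu, hg r u hu]
  ring

end WithC

lemma mul_exp_diff_le (a δ : ℝ) (ha : 0 ≤ a) (hδ : 0 ≤ δ) (n : ℕ) :
    (n : ℝ) * (Real.exp (-(a / n)) - Real.exp (-((a + δ) / n))) ≤ δ := by
  rcases Nat.eq_zero_or_pos n with h | h
  · subst h; simp [hδ]
  have hn : (0:ℝ) < (n:ℝ) := by exact_mod_cast h
  have hsplit : Real.exp (-((a + δ) / n)) = Real.exp (-(a / n)) * Real.exp (-(δ / n)) := by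
    rw [← Real.exp_add]; congr 1; field_simp; ring
  have h1 : Real.exp (-(a / n)) ≤ 1 := Real.exp_le_one_iff.2 (neg_nonpos.2 (by positivity))
  have h2 : 1 - Real.exp (-(δ / n)) ≤ δ / n := one_sub_exp_le _
  have h3 : 0 ≤ 1 - Real.exp (-(δ / n)) := by
    have : Real.exp (-(δ / n)) ≤ 1 := Real.exp_le_one_iff.2 (neg_nonpos.2 (by positivity))
    linarith
  have key : Real.exp (-(a / n)) - Real.exp (-((a + δ) / n))
      = Real.exp (-(a / n)) * (1 - Real.exp (-(δ / n))) := by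
    rw [hsplit]; ring
  rw [key]
  calc (n:ℝ) * (Real.exp (-(a / n)) * (1 - Real.exp (-(δ / n))))
      ≤ (n:ℝ) * (1 * (δ / n)) := by
        apply mul_le_mul_of_nonneg_left _ (le_of_lt hn)
        exact mul_le_mul h1 h2 h3 zero_le_one
    _ = δ := by field_simp

section DD

variable (μ : Measure Ω) [IsProbabilityMeasure μ] (X : ℕ → Ω → ℝ)
  (hXmeas : ∀ i, Measurable (X i)) (hstat : IsStationary μ X) (c : ℕ → ℝ)
  (hg : ∀ d : ℕ, ∀ u : ℝ, 0 < u → gfun μ X d u = Real.exp (-(c d / u)))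

include hXmeas hstat hg

lemma dd_antitone : Antitone (fun j => c (j + 1) - c j) := by
  apply antitone_nat_of_succ_le
  intro j
  have hineq : ∀ n : ℕ, 1 ≤ n →
      (n:ℝ) * (Real.exp (-(c (j+1) / n)) - Real.exp (-(c (j+2) / n)))
        ≤ (n:ℝ) * (Real.exp (-(c j / n)) - Real.exp (-(c (j+1) / n))) := by
    intro n hn
    have hn0 : (0:ℝ) < (n:ℝ) := by exact_mod_cast hn
    have e1 := pr_exc μ X hXmeas hstat c hg (j+1) (n:ℝ) hn0
    have e2 := pr_exc μ X hXmeas hstat c hg j (n:ℝ) hn0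
    have hsub : ({ω | (n:ℝ) < X 1 ω} ∩ {ω | ∀ s ∈ Finset.Icc 2 (j + 1 + 1), X s ω ≤ (n:ℝ)})
        ⊆ ({ω | (n:ℝ) < X 1 ω} ∩ {ω | ∀ s ∈ Finset.Icc 2 (j + 1), X s ω ≤ (n:ℝ)}) := by
      apply Set.inter_subset_inter_right
      intro ω hω s hs
      refine hω s ?_
      simp only [Finset.mem_Icc] at hs ⊢; omega
    have := pr_mono μ hsub
    rw [e1, e2] at this
    have e3 : j + 1 + 1 = j + 2 := rfl
    rw [e3] at this
    exact mul_le_mul_of_nonneg_left this (le_of_lt hn0)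
  have hL := tendsto_exp_diff_nat (c (j+1)) (c (j+2))
  have hR := tendsto_exp_diff_nat (c j) (c (j+1))
  have := le_of_tendsto_of_tendsto hL hR ?_
  · have e : j + 1 + 1 = j + 2 := rfl
    rw [e]; linarith
  · filter_upwards [eventually_ge_atTop 1] with n hn
    exact hineq n hn

end DD

lemma alphaMix_nonneg (μ : Measure Ω) (X : ℕ → Ω → ℝ) (u : ℝ) (n l : ℕ) :
    0 ≤ alphaMix μ X u n l := by
  apply Real.sSup_nonneg
  rintro x ⟨i₁, p, q, j₁, _, _, _, _, _, rfl⟩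
  exact abs_nonneg _

lemma alphaMix_bddAbove (μ : Measure Ω) [IsProbabilityMeasure μ] (X : ℕ → Ω → ℝ)
    (u : ℝ) (n l : ℕ) :
    BddAbove {a : ℝ | ∃ i₁ p q j₁ : ℕ, 1 ≤ i₁ ∧ 1 ≤ p ∧ 1 ≤ q ∧
    i₁ + p + l ≤ j₁ ∧ j₁ + q ≤ n ∧
    a = |pr μ (maxLE X i₁ (i₁ + p) u ∩ maxLE X j₁ (j₁ + q) u)
        - pr μ (maxLE X i₁ (i₁ + p) u) * pr μ (maxLE X j₁ (j₁ + q) u)|} := by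
  refine ⟨1, ?_⟩
  rintro x ⟨i₁, p, q, j₁, _, _, _, _, _, rfl⟩
  rw [abs_le]
  have h1 := pr_le_one μ (maxLE X i₁ (i₁ + p) u ∩ maxLE X j₁ (j₁ + q) u)
  have h2 := pr_nonneg μ (maxLE X i₁ (i₁ + p) u ∩ maxLE X j₁ (j₁ + q) u)
  have h3 := pr_le_one μ (maxLE X i₁ (i₁ + p) u)
  have h4 := pr_nonneg μ (maxLE X i₁ (i₁ + p) u)
  have h5 := pr_le_one μ (maxLE X j₁ (j₁ + q) u)
  have h6 := pr_nonneg μ (maxLE X j₁ (j₁ + q) u)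
  constructor <;> nlinarith

section D2

variable (μ : Measure Ω) [IsProbabilityMeasure μ] (X : ℕ → Ω → ℝ)
  (hXmeas : ∀ i, Measurable (X i)) (hstat : IsStationary μ X) (c : ℕ → ℝ)
  (hg : ∀ d : ℕ, ∀ u : ℝ, 0 < u → gfun μ X d u = Real.exp (-(c d / u)))
  (hc0 : c 0 = 0) (hc1 : c 1 = 1) (hmono : Monotone c)

include hXmeas hstat hg hc0 hc1 hmono

lemma dinf_ge (hD2 : CondDk μ X (fun n : ℕ => (n : ℝ) / 1) 2) :
    c 2 - 1 ≤ ⨅ j, (c (j + 1) - c j) := by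
  obtain ⟨kseq, ⟨l, hktop, hkα, hkl⟩, hloc⟩ := hD2
  have hloc' : Tendsto (fun n : ℕ => (n : ℝ) *
      pr μ ({ω | (n:ℝ)/1 < X 1 ω} ∩ maxLE X 1 2 ((n:ℝ)/1)
        ∩ maxGT X 2 (n / kseq n) ((n:ℝ)/1))) atTop (𝓝 0) := hloc
  simp only [div_one] at hloc' hkα
  set r : ℕ → ℕ := fun n => n / kseq n with hr
  by_cases hcase : ∀ m : ℕ, ∃ᶠ n in atTop, m ≤ r n
  · -- blocks go to infinity along a subsequence
    apply le_ciInf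
    intro j
    obtain ⟨φ, hφmono, hφr⟩ := extraction_of_frequently_atTop (hcase (j + 3))
    have hφtop : Tendsto φ atTop atTop := hφmono.tendsto_atTop
    have hAφ := (tendsto_exp_diff_nat (c 1) (c 2)).comp hφtop
    have hlocφ := hloc'.comp hφtop
    have hBφ : Tendsto (fun k => (φ k : ℝ) *
        (Real.exp (-(c (r (φ k) - 1) / (φ k : ℝ))) - Real.exp (-(c (r (φ k)) / (φ k : ℝ)))))
        atTop (𝓝 (c 2 - c 1)) := by
      have hsub := hAφ.sub hlocφ
      rw [sub_zero] at hsub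
      apply hsub.congr
      intro k
      have hr3 : 3 ≤ r (φ k) := le_trans (by omega) (hφr k)
      have hn1 : 1 ≤ φ k := le_trans (le_trans (by omega) hr3) (Nat.div_le_self _ _)
      have hn0 : (0:ℝ) < (φ k : ℝ) := by exact_mod_cast hn1
      simp only [Function.comp]
      rw [pr_D2event μ X hXmeas hstat c hg (r (φ k)) hr3 (φ k : ℝ) hn0]
      ring
    have hbound : ∀ k, (φ k : ℝ) *
        (Real.exp (-(c (r (φ k) - 1) / (φ k : ℝ))) - Real.exp (-(c (r (φ k)) / (φ k : ℝ))))
          ≤ c (j + 1) - c j := by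
      intro k
      have hrm : j + 3 ≤ r (φ k) := hφr k
      have h1 : r (φ k) - 1 + 1 = r (φ k) := by omega
      have hca : 0 ≤ c (r (φ k) - 1) := by
        rw [← hc0]; exact hmono (Nat.zero_le _)
      have hδ : 0 ≤ c (r (φ k)) - c (r (φ k) - 1) := by
        have := hmono (Nat.sub_le (r (φ k)) 1); linarith
      have hkey := mul_exp_diff_le (c (r (φ k) - 1)) (c (r (φ k)) - c (r (φ k) - 1)) hca hδ (φ k)
      have e : c (r (φ k) - 1) + (c (r (φ k)) - c (r (φ k) - 1)) = c (r (φ k)) := by ring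
      rw [e] at hkey
      have hanti := dd_antitone μ X hXmeas hstat c hg (show j ≤ r (φ k) - 1 by omega)
      simp only at hanti
      rw [h1] at hanti
      linarith
    have := le_of_tendsto hBφ (Eventually.of_forall hbound)
    rw [hc1] at this
    exact this
  · -- blocks stay bounded: full independence of block exponents
    push_neg at hcase
    obtain ⟨m, hm⟩ := hcase
    have hm1 : 1 ≤ m := by
      by_contra h
      have hm0 : m = 0 := by omega
      obtain ⟨n, hn⟩ := hm.exists
      omega
    have hmR : (0:ℝ) < (m:ℝ) := by exact_mod_cast hm1
    have hk1 : ∀ᶠ n in atTop, 1 ≤ kseq n := by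
      filter_upwards [hktop.eventually_ge_atTop 1] with n hn
      exact_mod_cast hn
    have hkn : ∀ᶠ n : ℕ in atTop, (n : ℝ) < (m : ℝ) * (kseq n : ℝ) := by
      filter_upwards [hm, hk1] with n hn hkn
      have := (Nat.div_lt_iff_lt_mul hkn).1 hn
      exact_mod_cast this
    -- l n = 0 eventually
    have hl0 : ∀ᶠ n in atTop, l n = 0 := by
      have hlsq : Tendsto (fun n => (l n : ℝ)) atTop (𝓝 0) := by
        have hub : ∀ᶠ n in atTop, (l n : ℝ) ≤ (m:ℝ) * ((kseq n : ℝ) * (l n : ℝ) / (n : ℝ)) := by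
          filter_upwards [hkn, eventually_ge_atTop 1] with n hn hn1
          have hn0 : (0:ℝ) < (n:ℝ) := by exact_mod_cast hn1
          rw [← sub_nonneg]
          have hl : (0:ℝ) ≤ (l n : ℝ) := Nat.cast_nonneg _
          have hd : (0:ℝ) ≤ (m:ℝ) * (kseq n:ℝ) - (n:ℝ) := by linarith
          have e : (m:ℝ) * ((kseq n : ℝ) * (l n : ℝ) / (n : ℝ)) - (l n : ℝ)
              = ((m:ℝ) * (kseq n:ℝ) - (n:ℝ)) * (l n : ℝ) / (n:ℝ) := by
            field_simp
          rw [e]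
          positivity
        have hmul : Tendsto (fun n => (m:ℝ) * ((kseq n : ℝ) * (l n : ℝ) / (n : ℝ)))
            atTop (𝓝 0) := by
          have := hkl.const_mul (m:ℝ)
          simpa using this
        have hlb : ∀ᶠ n : ℕ in atTop, (0:ℝ) ≤ (l n : ℝ) :=
          Eventually.of_forall (fun n => Nat.cast_nonneg _)
        exact tendsto_of_tendsto_of_tendsto_of_le_of_le' tendsto_const_nhds hmul hlb hub
      have := hlsq.eventually (eventually_lt_nhds (show (0:ℝ) < 1 by norm_num))
      filter_upwards [this] with n hn
      have : (l n : ℝ) < 1 := hn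
      exact_mod_cast Nat.lt_one_iff.1 (by exact_mod_cast this)
    -- n * alpha → 0
    have hnα : Tendsto (fun n : ℕ => (n:ℝ) * alphaMix μ X (n:ℝ) n (l n)) atTop (𝓝 0) := by
      have hub : ∀ᶠ n : ℕ in atTop, (n:ℝ) * alphaMix μ X (n:ℝ) n (l n)
          ≤ (m:ℝ) * ((kseq n : ℝ) * alphaMix μ X (n:ℝ) n (l n)) := by
        filter_upwards [hkn] with n hn
        have hα := alphaMix_nonneg μ X (n:ℝ) n (l n)
        nlinarith
      have hmul : Tendsto (fun n : ℕ => (m:ℝ) * ((kseq n : ℝ) * alphaMix μ X (n:ℝ) n (l n)))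
          atTop (𝓝 0) := by
        have := hkα.const_mul (m:ℝ); simpa using this
      have hlb : ∀ᶠ n : ℕ in atTop, (0:ℝ) ≤ (n:ℝ) * alphaMix μ X (n:ℝ) n (l n) :=
        Eventually.of_forall (fun n =>
          mul_nonneg (Nat.cast_nonneg _) (alphaMix_nonneg μ X _ _ _))
      exact tendsto_of_tendsto_of_tendsto_of_le_of_le' tendsto_const_nhds hmul hlb hub
    -- additivity of c
    have hadd : ∀ p q : ℕ, 1 ≤ p → 1 ≤ q → c (p + q) = c p + c q := by
      intro p q hp hq
      have hel : ∀ᶠ n : ℕ in atTop,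
          |(n:ℝ) * (Real.exp (-(c (p + q) / (n:ℝ))) - Real.exp (-((c p + c q) / (n:ℝ))))|
            ≤ (n:ℝ) * alphaMix μ X (n:ℝ) n (l n) := by
        filter_upwards [hl0, eventually_ge_atTop (p + q + 1)] with n hln hn
        have hn1 : 1 ≤ n := by omega
        have hn0 : (0:ℝ) < (n:ℝ) := by exact_mod_cast hn1
        -- the candidate element of the sup
        have hv1 : pr μ (maxLE X 1 (1 + p) (n:ℝ)) = Real.exp (-(c p / (n:ℝ))) := by
          have : maxLE X 1 (1 + p) (n:ℝ) = {ω | ∀ s ∈ Finset.Icc (1+1) (1+p), X s ω ≤ (n:ℝ)} := rfl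
          rw [this, pr_block μ X hXmeas hstat 1 p (n:ℝ), hg p (n:ℝ) hn0]
        have hv2 : pr μ (maxLE X (1 + p) ((1 + p) + q) (n:ℝ)) = Real.exp (-(c q / (n:ℝ))) := by
          have : maxLE X (1 + p) ((1 + p) + q) (n:ℝ)
              = {ω | ∀ s ∈ Finset.Icc ((1+p)+1) ((1+p)+q), X s ω ≤ (n:ℝ)} := rfl
          rw [this, pr_block μ X hXmeas hstat (1+p) q (n:ℝ), hg q (n:ℝ) hn0]
        have hv3 : pr μ (maxLE X 1 (1 + p) (n:ℝ) ∩ maxLE X (1 + p) ((1 + p) + q) (n:ℝ))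
            = Real.exp (-(c (p + q) / (n:ℝ))) := by
          have e : maxLE X 1 (1 + p) (n:ℝ) ∩ maxLE X (1 + p) ((1 + p) + q) (n:ℝ)
              = {ω | ∀ s ∈ Finset.Icc (1+1) (1+(p+q)), X s ω ≤ (n:ℝ)} := by
            ext ω
            simp only [maxLE, Set.mem_inter_iff, Set.mem_setOf_eq, Finset.mem_Icc]
            constructor
            · rintro ⟨h1, h2⟩ s ⟨hs1, hs2⟩
              rcases Nat.lt_or_ge s (1 + p + 1) with h | h
              · exact h1 s ⟨by omega, by omega⟩
              · exact h2 s ⟨by omega, by omega⟩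
            · intro h
              exact ⟨fun s hs => h s ⟨by omega, by omega⟩, fun s hs => h s ⟨by omega, by omega⟩⟩
          rw [e, pr_block μ X hXmeas hstat 1 (p+q) (n:ℝ), hg (p+q) (n:ℝ) hn0]
        have hmem : |pr μ (maxLE X 1 (1 + p) (n:ℝ) ∩ maxLE X (1 + p) ((1 + p) + q) (n:ℝ))
            - pr μ (maxLE X 1 (1 + p) (n:ℝ)) * pr μ (maxLE X (1 + p) ((1 + p) + q) (n:ℝ))|
              ≤ alphaMix μ X (n:ℝ) n (l n) := by
          apply le_csSup (alphaMix_bddAbove μ X (n:ℝ) n (l n))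
          exact ⟨1, p, q, 1 + p, le_refl 1, hp, hq, by omega, by omega, rfl⟩
        rw [hv1, hv2, hv3] at hmem
        have hprod : Real.exp (-(c p / (n:ℝ))) * Real.exp (-(c q / (n:ℝ)))
            = Real.exp (-((c p + c q) / (n:ℝ))) := by
          rw [← Real.exp_add]; congr 1; field_simp; ring
        rw [hprod] at hmem
        rw [abs_mul, abs_of_nonneg (le_of_lt hn0)]
        exact mul_le_mul_of_nonneg_left hmem (le_of_lt hn0)
      have hD := (tendsto_exp_diff_nat (c (p + q)) (c p + c q)).abs
      have hle := le_of_tendsto_of_tendsto hD hnα hel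
      have habs := abs_nonneg ((c p + c q) - c (p + q))
      have : |(c p + c q) - c (p + q)| = 0 := le_antisymm hle habs
      have := abs_eq_zero.1 this
      linarith
    -- conclude : all increments are 1
    have hddone : ∀ j : ℕ, c (j + 1) - c j = 1 := by
      intro j
      rcases Nat.eq_zero_or_pos j with h | h
      · subst h; rw [hc0, hc1]; ring
      · rw [hadd j 1 h (le_refl 1), hc1]; ring
    have hc2 : c 2 = 2 := by
      have := hadd 1 1 (le_refl 1) (le_refl 1)
      rw [hc1] at this; norm_num [this]
    apply le_ciInf
    intro j
    rw [hddone j, hc2]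
    norm_num

end D2

section Integral

variable (μ : Measure Ω) [IsProbabilityMeasure μ] (X : ℕ → Ω → ℝ)
  (hXmeas : ∀ i, Measurable (X i))
  (hfrech : ∀ x : ℝ, 0 < x → pr μ {ω | X 1 ω ≤ x} = Real.exp (-(1 / x)))
  (c : ℕ → ℝ)
  (hg : ∀ d : ℕ, ∀ u : ℝ, 0 < u → gfun μ X d u = Real.exp (-(c d / u)))
  (hc2 : 1 ≤ c 2)

include hXmeas hfrech hg hc2

lemma max_event (u : ℝ) :
    {ω : Ω | max (X 1 ω) (X 2 ω) ≤ u} = {ω | ∀ s ∈ Finset.Icc 1 2, X s ω ≤ u} := by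
  ext ω
  simp only [Set.mem_setOf_eq, max_le_iff, Finset.mem_Icc]
  constructor
  · rintro ⟨h1, h2⟩ s ⟨hs1, hs2⟩
    interval_cases s
    · exact h1
    · exact h2
  · intro h
    exact ⟨h 1 ⟨le_refl 1, by omega⟩, h 2 ⟨by omega, le_refl 2⟩⟩

lemma measure_max_le (u : ℝ) (hu : 0 < u) :
    μ {ω : Ω | max (X 1 ω) (X 2 ω) ≤ u} = ENNReal.ofReal (Real.exp (-(c 2 / u))) := by
  rw [max_event μ X hXmeas hfrech c hg hc2]
  have h := hg 2 u hu
  rw [gfun, pr] at h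
  rw [← h, ENNReal.ofReal_toReal (measure_ne_top μ _)]

lemma null_max_nonpos : μ {ω : Ω | max (X 1 ω) (X 2 ω) ≤ 0} = 0 := by
  have key : ∀ k : ℕ, pr μ {ω : Ω | max (X 1 ω) (X 2 ω) ≤ 0} ≤ Real.exp (-((k:ℝ) + 1)) := by
    intro k
    have hpos : (0:ℝ) < 1 / ((k:ℝ) + 1) := by positivity
    have hsub : {ω : Ω | max (X 1 ω) (X 2 ω) ≤ 0} ⊆ {ω | X 1 ω ≤ 1 / ((k:ℝ) + 1)} := by
      intro ω hω
      simp only [Set.mem_setOf_eq, max_le_iff] at hω ⊢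
      linarith [hω.1]
    have := pr_mono μ hsub
    rw [hfrech _ hpos] at this
    rw [one_div_one_div] at this
    exact this
  have hlim : Tendsto (fun k : ℕ => Real.exp (-((k:ℝ) + 1))) atTop (𝓝 0) := by
    apply Real.tendsto_exp_atBot.comp
    apply tendsto_neg_atTop_atBot.comp
    exact tendsto_atTop_add_const_right atTop 1 tendsto_natCast_atTop_atTop
  have hle : pr μ {ω : Ω | max (X 1 ω) (X 2 ω) ≤ 0} ≤ 0 :=
    ge_of_tendsto hlim (Eventually.of_forall key)
  have heq : pr μ {ω : Ω | max (X 1 ω) (X 2 ω) ≤ 0} = 0 :=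
    le_antisymm hle (pr_nonneg μ _)
  rw [pr, ENNReal.toReal_eq_zero_iff] at heq
  rcases heq with h | h
  · exact h
  · exact absurd h (measure_ne_top μ _)

lemma map_S_eq :
    Measure.map (fun ω => Real.exp (-(c 2 / max (X 1 ω) (X 2 ω)))) μ
      = volume.restrict (Set.Ioc (0:ℝ) 1) := by
  have hc2pos : (0:ℝ) < c 2 := lt_of_lt_of_le one_pos hc2
  set M : Ω → ℝ := fun ω => max (X 1 ω) (X 2 ω) with hM
  set S : Ω → ℝ := fun ω => Real.exp (-(c 2 / M ω)) with hSdef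
  have hMmeas : Measurable M := (hXmeas 1).max (hXmeas 2)
  have hSmeas : Measurable S :=
    Real.measurable_exp.comp ((measurable_const.div hMmeas).neg)
  haveI : IsProbabilityMeasure (Measure.map S μ) :=
    Measure.isProbabilityMeasure_map hSmeas.aemeasurable
  apply Measure.ext_of_Iic
  intro a
  rw [Measure.map_apply hSmeas measurableSet_Iic,
    Measure.restrict_apply measurableSet_Iic]
  rcases le_or_gt a 0 with ha | ha
  · -- empty
    have h1 : S ⁻¹' Set.Iic a = ∅ := by
      ext ω
      simp only [Set.mem_preimage, Set.mem_Iic, Set.mem_empty_iff_false, iff_false, not_le]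
      exact lt_of_le_of_lt ha (Real.exp_pos _)
    have h2 : Set.Iic a ∩ Set.Ioc (0:ℝ) 1 = ∅ := by
      ext x
      simp only [Set.mem_inter_iff, Set.mem_Iic, Set.mem_Ioc, Set.mem_empty_iff_false, iff_false]
      rintro ⟨h3, h4, h5⟩
      linarith
    rw [h1, h2]
    simp
  rcases lt_or_ge a 1 with ha1 | ha1
  · -- main case 0 < a < 1
    have hloga : Real.log a < 0 := Real.log_neg ha ha1
    set v : ℝ := c 2 / (- Real.log a) with hv
    have hvpos : 0 < v := by
      apply div_pos hc2pos; linarith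
    have hc2v : c 2 / v = - Real.log a := by
      rw [hv]
      field_simp
    have hset : S ⁻¹' Set.Iic a
        = {ω : Ω | M ω ≤ v} \ {ω : Ω | M ω ≤ 0} := by
      ext ω
      simp only [Set.mem_preimage, Set.mem_Iic, Set.mem_diff, Set.mem_setOf_eq, not_le]
      constructor
      · intro h
        have hMpos : 0 < M ω := by
          by_contra hM0
          push_neg at hM0
          have : c 2 / M ω ≤ 0 := div_nonpos_of_nonneg_of_nonpos (le_of_lt hc2pos) hM0
          have h1 : 1 ≤ Real.exp (-(c 2 / M ω)) := by
            rw [← Real.exp_zero]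
            exact Real.exp_le_exp.2 (by linarith)
          have : S ω = Real.exp (-(c 2 / M ω)) := rfl
          linarith
        refine ⟨?_, hMpos⟩
        have hexp : Real.exp (-(c 2 / M ω)) ≤ a := h
        rw [← Real.exp_log ha] at hexp
        have h2 : -(c 2 / M ω) ≤ Real.log a := Real.exp_le_exp.1 hexp
        have h3 : - Real.log a ≤ c 2 / M ω := by linarith
        -- M ≤ c2 / (−log a)
        rw [hv]
        rw [le_div_iff₀ (by linarith : (0:ℝ) < - Real.log a)]
        rw [← sub_nonneg]
        have h4 : (0:ℝ) < - Real.log a := by linarith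
        have h5 := (le_div_iff₀ hMpos).1 h3
        nlinarith [h5]
      · rintro ⟨h1, h2⟩
        have h3 : c 2 / v ≤ c 2 / M ω := div_le_div_of_nonneg_left (le_of_lt hc2pos) h2 h1
        rw [hc2v] at h3
        show Real.exp (-(c 2 / M ω)) ≤ a
        rw [← Real.exp_log ha]
        exact Real.exp_le_exp.2 (by linarith)
    rw [hset, measure_diff_null (null_max_nonpos μ X hXmeas hfrech c hg hc2),
      measure_max_le μ X hXmeas hfrech c hg hc2 v hvpos, hc2v]
    have : Real.exp (-(- Real.log a)) = a := by
      rw [neg_neg, Real.exp_log ha]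
    rw [this]
    have h2 : Set.Iic a ∩ Set.Ioc (0:ℝ) 1 = Set.Ioc 0 a := by
      ext x
      simp only [Set.mem_inter_iff, Set.mem_Iic, Set.mem_Ioc]
      constructor
      · rintro ⟨h3, h4, h5⟩; exact ⟨h4, h3⟩
      · rintro ⟨h3, h4⟩; exact ⟨h4, h3, by linarith⟩
    rw [h2, Real.volume_Ioc, sub_zero]
  · -- a ≥ 1 : full measure
    have hcompl : (S ⁻¹' Set.Iic a)ᶜ ⊆ {ω : Ω | M ω ≤ 0} := by
      intro ω hω
      simp only [Set.mem_compl_iff, Set.mem_preimage, Set.mem_Iic, not_le] at hω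
      simp only [Set.mem_setOf_eq]
      by_contra hM0
      push_neg at hM0
      have : 0 < c 2 / M ω := div_pos hc2pos hM0
      have h1 : Real.exp (-(c 2 / M ω)) < 1 := by
        rw [← Real.exp_zero]
        exact Real.exp_lt_exp.2 (by linarith)
      have : S ω = Real.exp (-(c 2 / M ω)) := rfl
      linarith
    have hnull : μ ((S ⁻¹' Set.Iic a)ᶜ) = 0 :=
      measure_mono_null hcompl (null_max_nonpos μ X hXmeas hfrech c hg hc2)
    have hfull : μ (S ⁻¹' Set.Iic a) = 1 := by
      have := measure_add_measure_compl (μ := μ) (s := S ⁻¹' Set.Iic a) (hSmeas measurableSet_Iic)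
      rw [hnull, add_zero, measure_univ] at this
      exact this
    rw [hfull]
    have h2 : Set.Iic a ∩ Set.Ioc (0:ℝ) 1 = Set.Ioc 0 1 := by
      ext x
      simp only [Set.mem_inter_iff, Set.mem_Iic, Set.mem_Ioc]
      constructor
      · rintro ⟨h3, h4, h5⟩; exact ⟨h4, h5⟩
      · rintro ⟨h3, h4⟩; exact ⟨by linarith, h3, h4⟩
    rw [h2, Real.volume_Ioc]
    norm_num

lemma integral_eval :
    ∫ ω, Real.exp (-(1 / max (X 1 ω) (X 2 ω))) ∂μ = c 2 / (c 2 + 1) := by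
  have hc2pos : (0:ℝ) < c 2 := lt_of_lt_of_le one_pos hc2
  set M : Ω → ℝ := fun ω => max (X 1 ω) (X 2 ω) with hM
  set S : Ω → ℝ := fun ω => Real.exp (-(c 2 / M ω)) with hSdef
  have hMmeas : Measurable M := (hXmeas 1).max (hXmeas 2)
  have hSmeas : Measurable S :=
    Real.measurable_exp.comp ((measurable_const.div hMmeas).neg)
  set e : ℝ := 1 / c 2 with he
  have hepos : 0 < e := by positivity
  have hpoint : ∀ ω, Real.exp (-(1 / M ω)) = (S ω) ^ e := by
    intro ω
    rw [hSdef]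
    rw [← Real.exp_mul]
    congr 1
    rcases eq_or_ne (M ω) 0 with h | h
    · rw [h]; simp
    · rw [he]
      field_simp
  have hint : ∫ ω, Real.exp (-(1 / M ω)) ∂μ = ∫ ω, (S ω) ^ e ∂μ := by
    congr 1
    ext ω
    exact hpoint ω
  rw [hint]
  have hrpow_meas : Measurable (fun x : ℝ => x ^ e) :=
    (Real.continuous_rpow_const (le_of_lt hepos)).measurable
  have hmap := integral_map (μ := μ) hSmeas.aemeasurable
    (f := fun x : ℝ => x ^ e) (hrpow_meas.aestronglyMeasurable)
  rw [← hmap, map_S_eq μ X hXmeas hfrech c hg hc2]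
  have : ∫ x : ℝ in Set.Ioc (0:ℝ) 1, x ^ e = ∫ x : ℝ in (0:ℝ)..1, x ^ e := by
    rw [intervalIntegral.integral_of_le zero_le_one]
  rw [this, integral_rpow (Or.inl (by linarith : (-1:ℝ) < e))]
  rw [Real.one_rpow, Real.zero_rpow (by linarith : e + 1 ≠ 0)]
  rw [he]
  rw [div_add' _ _ _ (ne_of_gt hc2pos)]
  rw [div_div_eq_mul_div, one_mul]
  rw [sub_zero]
  ring_nf

end Integral


/-- for a stationary max-stable sequence with unit Fréchet marginals
satisfying `D^{(2)}(u_n)` for `u_n = n/τ`, the extremal index equals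
`1/(1 - E(e^{-1/(X_1 ∨ X_2)})) - 2`. -/

theorem extremal_index_maxstable_D2
    (μ : Measure Ω) [IsProbabilityMeasure μ]
    (X : ℕ → Ω → ℝ)
    (hXmeas : ∀ i, Measurable (X i))
    (hstat : IsStationary μ X)
    (hfrech : ∀ x : ℝ, 0 < x → pr μ {ω | X 1 ω ≤ x} = Real.exp (-(1 / x)))
    (hms : MaxStableFDD μ X)
    (hD2 : ∀ τ : ℝ, 0 < τ → CondDk μ X (fun n => (n : ℝ) / τ) 2) :
    ∀ τ : ℝ, 0 < τ →
      Tendsto (fun n : ℕ => pr μ {ω | ∀ i ∈ Finset.Icc 1 n, X i ω ≤ (n : ℝ) / τ}) atTop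
        (nhds (Real.exp
          (-((1 / (1 - ∫ ω, Real.exp (-(1 / max (X 1 ω) (X 2 ω))) ∂μ) - 2) * τ)))) := by
  obtain ⟨c, hc0, hc1, hmono, hcle, hg⟩ := exists_cseq μ X hXmeas hstat hfrech hms
  set dd : ℕ → ℝ := fun j => c (j + 1) - c j with hdd
  have hanti : Antitone dd := dd_antitone μ X hXmeas hstat c hg
  have hbdd : BddBelow (Set.range dd) := by
    refine ⟨0, ?_⟩
    rintro x ⟨j, rfl⟩
    have := hmono (Nat.le_succ j)
    simp only [hdd]
    linarith
  set dinf : ℝ := ⨅ j, dd j with hdinfdef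
  have hdd_tendsto : Tendsto dd atTop (𝓝 dinf) := tendsto_atTop_ciInf hanti hbdd
  have hsum : ∀ n : ℕ, ∑ i ∈ Finset.range n, dd i = c n := by
    intro n
    have := Finset.sum_range_sub c n
    simp only [hdd]
    rw [this, hc0, sub_zero]
  have hcd : Tendsto (fun n : ℕ => c n / (n : ℝ)) atTop (𝓝 dinf) := by
    apply hdd_tendsto.cesaro.congr
    intro n
    rw [hsum n, inv_mul_eq_div]
  have hup : dinf ≤ c 2 - 1 := by
    have h := ciInf_le hbdd 1
    have e : dd 1 = c 2 - c 1 := rfl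
    rw [e, hc1] at h
    exact h
  have hlow : c 2 - 1 ≤ dinf :=
    dinf_ge μ X hXmeas hstat c hg hc0 hc1 hmono (hD2 1 one_pos)
  have hdinf : dinf = c 2 - 1 := le_antisymm hup hlow
  intro τ hτ
  have hc2 : 1 ≤ c 2 := by
    rw [← hc1]; exact hmono (by norm_num)
  have hint := integral_eval μ X hXmeas hfrech c hg hc2
  have hconst : 1 / (1 - ∫ ω, Real.exp (-(1 / max (X 1 ω) (X 2 ω))) ∂μ) - 2 = c 2 - 1 := by
    rw [hint]
    have hne : c 2 + 1 ≠ 0 := by linarith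
    have h1 : 1 - c 2 / (c 2 + 1) = 1 / (c 2 + 1) := by field_simp; ring
    rw [h1, one_div_one_div]
    ring
  rw [hconst]
  have hlim : Tendsto (fun n : ℕ => Real.exp (-(c n / (n:ℝ) * τ))) atTop
      (𝓝 (Real.exp (-((c 2 - 1) * τ)))) := by
    have h2 : Tendsto (fun n : ℕ => -(c n / (n:ℝ) * τ)) atTop (𝓝 (-((c 2 - 1) * τ))) := by
      rw [← hdinf]
      exact (hcd.mul_const τ).neg
    exact (Real.continuous_exp.tendsto _).comp h2
  apply hlim.congr'
  filter_upwards [eventually_ge_atTop 1] with n hn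
  have hn0 : (0:ℝ) < (n:ℝ) := by exact_mod_cast hn
  have hu : 0 < (n:ℝ) / τ := by positivity
  have hgn := hg n ((n:ℝ)/τ) hu
  rw [gfun] at hgn
  rw [hgn]
  congr 1
  rw [div_div_eq_mul_div, div_mul_eq_mul_div]


end EIPaper
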